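/- Suppose Γ is neither bipartite nor almost bipartite (i.e., a_r ≠ 0 for some 0 ≤ r ≤ D−1). If θ, θ′ are real numbers other than k forming a tight pair, then θ ≠ θ′. -/
import Mathlib


/-- `σ` is a pseudo cosine sequence: `σ 0 = 1` and
`c_i σ_{i-1} + a_i σ_i + b_i σ_{i+1} = k σ_1 σ_i` for `1 ≤ i ≤ D-1`
(the case `i = 0` is automatic since `c_0 = 0`, `a_0 = 0`, `b_0 = k`). -/
def IsPCS (D : ℕ) (k : ℝ) (a b c σ : ℕ → ℝ) : Prop :=
  σ 0 = 1 ∧ ∀ i, 1 ≤ i → i ≤ D - 1 →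
    c i * σ (i - 1) + a i * σ i + b i * σ (i + 1) = k * σ 1 * σ i

/-- The pair of real numbers θ, θ' is tight: the entrywise product of their
pseudo cosine sequences is again a pseudo cosine sequence (recall θ = k·σ₁). -/
def Tight (D : ℕ) (k : ℝ) (a b c : ℕ → ℝ) (θ θ' : ℝ) : Prop :=
  ∀ σ ρ : ℕ → ℝ,
    IsPCS D k a b c σ → k * σ 1 = θ →
    IsPCS D k a b c ρ → k * ρ 1 = θ' →
    IsPCS D k a b c (fun i => σ i * ρ i)

/-- Auxiliary recursively defined pair sequence for building a pseudo cosine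
sequence with first cosine `t / k`. -/
noncomputable def pcsSeq (k t : ℝ) (a b c : ℕ → ℝ) : ℕ → ℝ × ℝ
  | 0 => (1, t / k)
  | n + 1 =>
    let p := pcsSeq k t a b c n
    (p.2, (t * p.2 - c (n + 1) * p.1 - a (n + 1) * p.2) / b (n + 1))

/-- If Γ is neither bipartite nor almost bipartite (a_r ≠ 0 for some
0 ≤ r ≤ D−1) and θ, θ' ≠ k form a tight pair, then θ ≠ θ'. -/
theorem tight_pair_distinct (D : ℕ) (hD : 3 ≤ D) (k : ℝ) (a b c : ℕ → ℝ)
    (hk : 0 < k) (hb0 : b 0 = k) (ha0 : a 0 = 0) (hc1 : c 1 = 1)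
    (hsum : ∀ i, i ≤ D → c i + a i + b i = k)
    (hapos : ∀ i, i ≤ D → 0 ≤ a i)
    (hbpos : ∀ i, i ≤ D - 1 → 0 < b i)
    (hcpos : ∀ i, 1 ≤ i → i ≤ D → 0 < c i)
    (hr : ∃ r, r ≤ D - 1 ∧ a r ≠ 0)
    (θ θ' : ℝ) (hθ : θ ≠ k) (hθ' : θ' ≠ k)
    (ht : Tight D k a b c θ θ') :
    θ ≠ θ' := by
  intro hθθ'
  have hk0 : k ≠ 0 := ne_of_gt hk
  set σ : ℕ → ℝ := fun i => (pcsSeq k θ a b c i).1 with hσdef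
  have hσ0 : σ 0 = 1 := rfl
  have hstep : ∀ n, σ (n + 1) = (pcsSeq k θ a b c n).2 := fun n => rfl
  have hσ1 : σ 1 = θ / k := by rw [hstep 0]; rfl
  have hkσ1 : k * σ 1 = θ := by rw [hσ1]; field_simp
  have hrec : ∀ i, 1 ≤ i → i ≤ D - 1 →
      c i * σ (i - 1) + a i * σ i + b i * σ (i + 1) = k * σ 1 * σ i := by
    intro i h1 h2
    obtain ⟨n, rfl⟩ := Nat.exists_eq_succ_of_ne_zero (by omega : i ≠ 0)
    have hb : b (n + 1) ≠ 0 := ne_of_gt (hbpos (n + 1) h2)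
    have e1 : σ (n + 1) = (pcsSeq k θ a b c n).2 := hstep n
    have e0 : σ (n + 1 - 1) = (pcsSeq k θ a b c n).1 := by
      simp [hσdef]
    have e2 : σ (n + 1 + 1) = (θ * (pcsSeq k θ a b c n).2
        - c (n + 1) * (pcsSeq k θ a b c n).1
        - a (n + 1) * (pcsSeq k θ a b c n).2) / b (n + 1) := by
      rw [hstep (n + 1)]
      rfl
    rw [eq_div_iff hb] at e2
    rw [hkσ1, e0, e1]
    linear_combination e2
  have hPCS : IsPCS D k a b c σ := ⟨hσ0, hrec⟩
  have hprod := ht σ σ hPCS hkσ1 hPCS (by rw [hkσ1, hθθ'])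
  obtain ⟨r, hrD, har⟩ := hr
  have hrD' : r ≤ D := le_trans hrD (Nat.sub_le D 1)
  have harpos : 0 < a r := lt_of_le_of_ne (hapos r hrD') (Ne.symm har)
  have hr1 : 1 ≤ r := by
    by_contra h
    push_neg at h
    interval_cases r
    exact har ha0
  have key : ∀ i, 1 ≤ i → i ≤ D - 1 →
      c i * a i * (σ (i - 1) - σ i) ^ 2 + c i * b i * (σ (i - 1) - σ (i + 1)) ^ 2
        + a i * b i * (σ i - σ (i + 1)) ^ 2 = 0 := by
    intro i h1 h2
    have e1 := hPCS.2 i h1 h2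
    have e2 := hprod.2 i h1 h2
    simp only at e2
    have hs := hsum i (le_trans h2 (Nat.sub_le D 1))
    linear_combination k * e2 - (c i * σ (i - 1) + a i * σ i + b i * σ (i + 1)
      + k * σ 1 * σ i) * e1
      + (c i * σ (i - 1) ^ 2 + a i * σ i ^ 2 + b i * σ (i + 1) ^ 2) * hs
  -- alternation: σ (i-1) = σ (i+1) for 1 ≤ i ≤ D-1
  have alt : ∀ i, 1 ≤ i → i ≤ D - 1 → σ (i - 1) = σ (i + 1) := by
    intro i h1 h2
    have hci : 0 < c i := hcpos i h1 (le_trans h2 (Nat.sub_le D 1))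
    have hbi : 0 < b i := hbpos i h2
    have hai : 0 ≤ a i := hapos i (le_trans h2 (Nat.sub_le D 1))
    have hky := key i h1 h2
    have t1 : 0 ≤ c i * a i * (σ (i - 1) - σ i) ^ 2 :=
      mul_nonneg (mul_nonneg hci.le hai) (sq_nonneg _)
    have t3 : 0 ≤ a i * b i * (σ i - σ (i + 1)) ^ 2 :=
      mul_nonneg (mul_nonneg hai hbi.le) (sq_nonneg _)
    have h0 : c i * b i * (σ (i - 1) - σ (i + 1)) ^ 2 = 0 :=
      le_antisymm (by linarith) (by positivity)
    have hsq : (σ (i - 1) - σ (i + 1)) ^ 2 = 0 := by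
      rcases mul_eq_zero.mp h0 with h | h
      · exact absurd h (ne_of_gt (mul_pos hci hbi))
      · exact h
    have := pow_eq_zero_iff (n := 2) (by norm_num) |>.mp hsq
    linarith
  -- at r: σ (r-1) = σ r
  have hrr : σ (r - 1) = σ r := by
    have hcr : 0 < c r := hcpos r hr1 hrD'
    have hbr : 0 < b r := hbpos r hrD
    have hky := key r hr1 hrD
    have t2 : 0 ≤ c r * b r * (σ (r - 1) - σ (r + 1)) ^ 2 :=
      mul_nonneg (mul_nonneg hcr.le hbr.le) (sq_nonneg _)
    have t3 : 0 ≤ a r * b r * (σ r - σ (r + 1)) ^ 2 :=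
      mul_nonneg (mul_nonneg harpos.le hbr.le) (sq_nonneg _)
    have h0 : c r * a r * (σ (r - 1) - σ r) ^ 2 = 0 :=
      le_antisymm (by linarith) (by positivity)
    have hsq : (σ (r - 1) - σ r) ^ 2 = 0 := by
      rcases mul_eq_zero.mp h0 with h | h
      · exact absurd h (ne_of_gt (mul_pos hcr harpos))
      · exact h
    have := pow_eq_zero_iff (n := 2) (by norm_num) |>.mp hsq
    linarith
  -- descending induction
  have claim : ∀ j, j ≤ r - 1 → σ (r - 1 - j) = σ (r - j) := by
    intro j
    induction j with
    | zero => intro _; simpa using hrr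
    | succ j ih =>
      intro hj
      have hj' : j ≤ r - 1 := le_trans (Nat.le_succ j) hj
      have ihj := ih hj'
      have hm1 : 1 ≤ r - 1 - j := by omega
      have hm2 : r - 1 - j ≤ D - 1 := by omega
      have halt := alt (r - 1 - j) hm1 hm2
      have h1 : r - 1 - j - 1 = r - 1 - (j + 1) := by omega
      have h2 : r - 1 - j + 1 = r - j := by omega
      have h3 : r - 1 - j = r - (j + 1) := by omega
      rw [h1, h2] at halt
      rw [halt, ← h3, ihj]
  have hfin := claim (r - 1) (le_refl _)
  have h01 : σ 0 = σ 1 := by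
    have h1 : r - 1 - (r - 1) = 0 := by omega
    have h2 : r - (r - 1) = 1 := by omega
    rwa [h1, h2] at hfin
  apply hθ
  rw [← hkσ1, ← h01, hσ0, mul_one]
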